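/- Let n ≥ 2 be a natural number and let σ be a real quaternion with Im σ ≠ 0. Set a = |Im σ| > 0 and z = Re σ + a·i ∈ ℂ. Then the (2n−2)-nd derivative at x = Re σ of the function ℝ → ℍ, x ↦ conj(x + Im σ)·(x² + a²)^{−2}, equals ((2n−2)!/(2·a³·|z|⁴))·( Im(u₂) − Im(u₁)·conj σ ), where u₁ = (z̄²/z^{2n−2})·(z + (2n−1)·(z−z̄)/2) and u₂ = (z̄²/z^{2n−3})·(z + (2n−2)·(z−z̄)/2) are complex numbers, Im denotes the complex imaginary part, and conj σ is the quaternion conjugate of σ. -/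

import Mathlib

/-! Send `i` to the unit quaternion `Im σ / |Im σ|`: this ℝ-algebra map `ℂ → ℍ` is continuous
linear, so it commutes with derivatives, and it carries `x ↦ conj z / |z|⁴ = 1 / (z² z̄)`, where
`z = x + a i`, to the quaternionic kernel. The partial fractions
`1 / (z² z̄) = ((1/z̄ - 1/z) - (z - z̄) / z²) / (z - z̄)²` reduce the derivatives to those of
inverse powers of `x + w`, and what is left is a rational identity in `z` and `z̄`. -/

open Quaternion Complex

/-- The complex number `z = x₁ + a·i`. -/
noncomputable def zOf (x₁ a : ℝ) : ℂ := (x₁ : ℂ) + (a : ℂ) * Complex.I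

/-- The complex number `(z̄²/z^l)·(z + (l+1)·(z−z̄)/2)`; for `l = 2n−2` this is
`u₁` and for `l = 2n−3` this is `u₂`. -/
noncomputable def uOf (l : ℕ) (z : ℂ) : ℂ :=
  (starRingEnd ℂ z) ^ 2 / z ^ l * (z + ((l : ℂ) + 1) * (z - starRingEnd ℂ z) / 2)

open ComplexConjugate

theorem ContinuousLinearMap.iteratedDeriv_comp_left {𝕜 F G : Type*} [NontriviallyNormedField 𝕜]
    [NormedAddCommGroup F] [NormedSpace 𝕜 F] [NormedAddCommGroup G] [NormedSpace 𝕜 G]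
    {f : 𝕜 → F} {x : 𝕜} {n : WithTop ℕ∞} (L : F →L[𝕜] G) (hf : ContDiffAt 𝕜 n f x) {i : ℕ}
    (hi : i ≤ n) : iteratedDeriv i (fun y => L (f y)) x = L (iteratedDeriv i f x) := by
  simp only [iteratedDeriv_eq_iteratedFDeriv]
  exact congr($(L.iteratedFDeriv_comp_left hf hi) _)

section InvPow

variable {w : ℂ}

theorem ofReal_add_ne_zero (hw : w.im ≠ 0) (x : ℝ) : (x : ℂ) + w ≠ 0 :=
  fun h => hw (by simpa using congrArg im h)

theorem hasDerivAt_inv_pow_ofReal_add (hw : w.im ≠ 0) (k : ℕ) (x : ℝ) :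
    HasDerivAt (fun y : ℝ => (((y : ℂ) + w) ^ (k + 1))⁻¹)
      (-(k + 1) * (((x : ℂ) + w) ^ (k + 2))⁻¹) x := by
  have hx := ofReal_add_ne_zero hw x
  have h := (((hasDerivAt_pow (k + 1) ((x : ℂ) + w)).inv (pow_ne_zero _ hx)).comp_add_const
    (x : ℂ) w).comp_ofReal
  refine h.congr_deriv ?_
  rw [Nat.add_sub_cancel]
  push_cast
  field_simp
  ring

theorem contDiff_inv_pow_ofReal_add (hw : w.im ≠ 0) (k : ℕ) :
    ContDiff ℝ ⊤ (fun y : ℝ => (((y : ℂ) + w) ^ (k + 1))⁻¹) :=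
  ((ofRealCLM.contDiff.add contDiff_const).pow _).inv
    fun y => pow_ne_zero _ (ofReal_add_ne_zero hw y)

theorem iteratedDeriv_inv_pow_ofReal_add (hw : w.im ≠ 0) (k m : ℕ) :
    iteratedDeriv m (fun y : ℝ => (((y : ℂ) + w) ^ (k + 1))⁻¹) = fun x : ℝ =>
      (-1) ^ m * ((k + m).factorial / k.factorial : ℂ) * (((x : ℂ) + w) ^ (k + m + 1))⁻¹ := by
  induction m with
  | zero => simp [k.factorial_ne_zero]
  | succ m ih =>
    funext x
    rw [iteratedDeriv_succ, ih]
    refine ((hasDerivAt_inv_pow_ofReal_add hw (k + m) x).const_mul _).deriv.trans ?_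
    push_cast [← add_assoc, Nat.factorial_succ]
    ring

end InvPow

theorem inv_sq_mul_eq_partial_fractions {K : Type*} [Field K] {z w : K} (hz : z ≠ 0) (hw : w ≠ 0)
    (hzw : z - w ≠ 0) :
    (z ^ 2 * w)⁻¹ = ((z - w) ^ 2)⁻¹ * (w⁻¹ - z⁻¹) - (z - w)⁻¹ * (z ^ 2)⁻¹ := by
  field_simp

theorem zOf_im (x a : ℝ) : (zOf x a).im = a := by simp [zOf]

noncomputable def complexKernel (a x : ℝ) : ℂ := ((x ^ 2 + a ^ 2) ^ 2)⁻¹ • conj (zOf x a)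

section ComplexKernel

variable {a : ℝ}

-- The exponents are written as `k + 1` to match `iteratedDeriv_inv_pow_ofReal_add`.
theorem complexKernel_eq_partial_fractions (ha : a ≠ 0) : complexKernel a = fun x : ℝ =>
    ((2 * a * I) ^ 2)⁻¹ * ((((x : ℂ) + conj (a * I)) ^ (0 + 1))⁻¹ - (((x : ℂ) + a * I) ^ (0 + 1))⁻¹)
      - (2 * a * I)⁻¹ * (((x : ℂ) + a * I) ^ (1 + 1))⁻¹ := by
  funext x
  have hz : zOf x a ≠ 0 := fun h => ha (by simpa [zOf_im] using congrArg im h)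
  have hnormSq : ((x ^ 2 + a ^ 2 : ℝ) : ℂ) = zOf x a * conj (zOf x a) := by
    rw [mul_conj, normSq_apply]; simp [zOf]; ring
  have hc : zOf x a - conj (zOf x a) = 2 * a * I := by
    rw [sub_conj, zOf_im]; push_cast; ring
  rw [complexKernel, Complex.real_smul, ofReal_inv, ofReal_pow, hnormSq]
  have := inv_sq_mul_eq_partial_fractions (w := conj (zOf x a)) hz (by simpa using hz)
    (by rw [hc]; simp [ha, I_ne_zero])
  rw [hc] at this
  simp only [zero_add, pow_one, map_mul, conj_ofReal, conj_I]
  convert this using 1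
  · field_simp
  · simp [zOf]

theorem contDiff_complexKernel (ha : a ≠ 0) : ContDiff ℝ ⊤ (complexKernel a) := by
  have hw : (a * I : ℂ).im ≠ 0 := by simpa using ha
  have hw' : (conj (a * I : ℂ)).im ≠ 0 := by simpa using ha
  rw [complexKernel_eq_partial_fractions ha]
  exact (contDiff_const.mul ((contDiff_inv_pow_ofReal_add hw' 0).sub
    (contDiff_inv_pow_ofReal_add hw 0))).sub (contDiff_const.mul (contDiff_inv_pow_ofReal_add hw 1))

theorem iteratedDeriv_complexKernel (ha : a ≠ 0) (m : ℕ) (x : ℝ) :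
    iteratedDeriv m (complexKernel a) x = (-1) ^ m * m.factorial *
      (((zOf x a - conj (zOf x a)) ^ 2)⁻¹ * ((conj (zOf x a) ^ (m + 1))⁻¹ - (zOf x a ^ (m + 1))⁻¹)
        - (m + 1) * (zOf x a - conj (zOf x a))⁻¹ * (zOf x a ^ (m + 2))⁻¹) := by
  have hw : (a * I : ℂ).im ≠ 0 := by simpa using ha
  have hw' : (conj (a * I : ℂ)).im ≠ 0 := by simpa using ha
  have hc : zOf x a - conj (zOf x a) = 2 * a * I := by
    rw [sub_conj, zOf_im]; push_cast; ring
  have hA := contDiff_inv_pow_ofReal_add hw' 0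
  have hB := contDiff_inv_pow_ofReal_add hw 0
  have hC := contDiff_inv_pow_ofReal_add hw 1
  rw [complexKernel_eq_partial_fractions ha,
    iteratedDeriv_fun_sub ((contDiff_const.mul (hA.sub hB)).of_le le_top).contDiffAt
      ((contDiff_const.mul hC).of_le le_top).contDiffAt,
    iteratedDeriv_const_mul_field, iteratedDeriv_const_mul_field,
    iteratedDeriv_fun_sub (hA.of_le le_top).contDiffAt (hB.of_le le_top).contDiffAt,
    iteratedDeriv_inv_pow_ofReal_add hw, iteratedDeriv_inv_pow_ofReal_add hw',
    iteratedDeriv_inv_pow_ofReal_add hw, hc]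
  simp only [zOf, map_add, conj_ofReal, zero_add, Nat.add_comm 1 m, Nat.factorial_succ]
  push_cast
  ring

theorem uOf_im_combination_eq (z : ℂ) (hz : z.im ≠ 0) (l : ℕ) :
    (((l + 1).factorial / (2 * z.im ^ 3 * ‖z‖ ^ 4) : ℝ) •
        (((uOf l z).im : ℂ) - (uOf (l + 1) z).im • conj z)) =
      (l + 1).factorial * (((z - conj z) ^ 2)⁻¹ * ((conj z ^ (l + 1 + 1))⁻¹ - (z ^ (l + 1 + 1))⁻¹)
        - ((l + 1 : ℕ) + 1) * (z - conj z)⁻¹ * (z ^ (l + 1 + 2))⁻¹) := by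
  have hc : z - conj z ≠ 0 := by
    rw [sub_conj]; simp [hz]
  have hz0 : z ≠ 0 := fun h => hz (by simp [h])
  have hw0 : conj z ≠ 0 := by simpa using hz0
  have hnorm : ((‖z‖ : ℝ) : ℂ) ^ 4 = (z * conj z) ^ 2 := by
    rw [mul_conj, ← Complex.sq_norm]; push_cast; ring
  simp only [real_smul]
  push_cast
  rw [hnorm, im_eq_sub_conj, im_eq_sub_conj, im_eq_sub_conj]
  simp only [uOf, map_mul, map_div₀, map_pow, map_add, map_sub, conj_conj, map_ofNat,
    map_natCast, map_one]
  generalize conj z = w at *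
  push_cast
  field_simp
  rw [I_sq]
  ring

theorem iteratedDeriv_succ_complexKernel (ha : a ≠ 0) (l : ℕ) (x : ℝ) :
    iteratedDeriv (l + 1) (complexKernel a) x = (-1) ^ (l + 1) *
      (((l + 1).factorial / (2 * a ^ 3 * ‖zOf x a‖ ^ 4) : ℝ) •
        (((uOf l (zOf x a)).im : ℂ) - (uOf (l + 1) (zOf x a)).im • conj (zOf x a))) := by
  have h := uOf_im_combination_eq (zOf x a) (by rwa [zOf_im]) l
  rw [zOf_im] at h
  rw [h, iteratedDeriv_complexKernel ha]
  ring

end ComplexKernel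

namespace Quaternion

theorem normalize_im_mul_self {q : ℍ[ℝ]} (hq : q.im ≠ 0) :
    (‖q.im‖⁻¹ • q.im) * (‖q.im‖⁻¹ • q.im) = -1 := by
  rw [smul_mul_smul_comm, ← sq q.im, im_sq, normSq_eq_norm_mul_self, smul_neg, ← coe_smul,
    smul_eq_mul]
  norm_cast
  field_simp
  norm_num

noncomputable def complexEmbedding (q : ℍ[ℝ]) (hq : q.im ≠ 0) : ℂ →ₐ[ℝ] ℍ[ℝ] :=
  Complex.liftAux _ (normalize_im_mul_self hq)

theorem complexEmbedding_conj_zOf {q : ℍ[ℝ]} (hq : q.im ≠ 0) (x : ℝ) :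
    complexEmbedding q hq (conj (zOf x ‖q.im‖)) = star ((x : ℍ[ℝ]) + q.im) := by
  have hq' : ‖q.im‖ ≠ 0 := norm_ne_zero_iff.2 hq
  rw [complexEmbedding, liftAux_apply, star_add, star_coe, star_im]
  simp [zOf, smul_smul, hq']

end Quaternion

/-- Explicit formula for the normalized Cauchy–Szegő kernel density: for a
quaternion `σ` with `Im σ ≠ 0`, `a = |Im σ|` and `z = Re σ + a·i ∈ ℂ`, the
`(2n−2)`-nd derivative at `x = Re σ` of `x ↦ conj(x + Im σ)·(x² + a²)^{−2}`
equals `((2n−2)!/(2a³|z|⁴))·(Im(u₂) − Im(u₁)·conj σ)`, where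
`u₁ = (z̄²/z^{2n−2})(z + (2n−1)(z−z̄)/2)` and
`u₂ = (z̄²/z^{2n−3})(z + (2n−2)(z−z̄)/2)`. -/
theorem cauchySzego_density_formula (n : ℕ) (hn : 2 ≤ n) (σ : ℍ[ℝ]) (hσ : σ.im ≠ 0) :
    iteratedDeriv (2 * n - 2)
        (fun x : ℝ => ((x ^ 2 + ‖σ.im‖ ^ 2) ^ 2)⁻¹ • star ((x : ℍ[ℝ]) + σ.im)) σ.re =
      (((2 * n - 2).factorial : ℝ)
          / (2 * ‖σ.im‖ ^ 3 * ‖zOf σ.re ‖σ.im‖‖ ^ 4)) •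
        (((uOf (2 * n - 3) (zOf σ.re ‖σ.im‖)).im : ℍ[ℝ])
          - (uOf (2 * n - 2) (zOf σ.re ‖σ.im‖)).im • star σ) := by
  have ha : ‖σ.im‖ ≠ 0 := norm_ne_zero_iff.2 hσ
  set φ := complexEmbedding σ hσ
  have hf : (fun x : ℝ => ((x ^ 2 + ‖σ.im‖ ^ 2) ^ 2)⁻¹ • star ((x : ℍ[ℝ]) + σ.im)) =
      fun x => φ.toLinearMap.toContinuousLinearMap (complexKernel ‖σ.im‖ x) := by
    funext x
    rw [LinearMap.coe_toContinuousLinearMap', AlgHom.toLinearMap_apply, complexKernel, map_smul,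
      complexEmbedding_conj_zOf]
  have hstar : star σ = φ (conj (zOf σ.re ‖σ.im‖)) := by
    rw [complexEmbedding_conj_zOf, Quaternion.re_add_im]
  obtain ⟨l, hl2, hl3⟩ : ∃ l, 2 * n - 2 = l + 1 ∧ 2 * n - 3 = l := ⟨2 * n - 3, by omega, rfl⟩
  have hsign : (-1 : ℂ) ^ (l + 1) = 1 := Even.neg_one_pow ⟨n - 1, by omega⟩
  rw [hf, ContinuousLinearMap.iteratedDeriv_comp_left _
      (contDiff_complexKernel ha).contDiffAt le_top, hl2, hl3,
    iteratedDeriv_succ_complexKernel ha, hsign, one_mul,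
    LinearMap.coe_toContinuousLinearMap', AlgHom.toLinearMap_apply, map_smul, map_sub, map_smul,
    AlgHom.map_coe_real_complex, hstar, Quaternion.algebraMap_def]
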